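/- If p ∈ S(g)^g is invariant and T is a g-invariant distribution on an open Ad-invariant subset of g (meaning T annihilates adj_a φ for all test functions φ and all a ∈ g), then the distribution T·p(∂) (the right action of p(∂) on T) is again g-invariant. -/

import Mathlib

/-- The adjoint vector field `adj_a` of a Lie algebra `(g, l)`, acting on functions by
`(adj_a f)(x) = -Df(x)[[a,x]]`, where `[a,x] = l a x`. -/
noncomputable def adjVF {g : Type*} [NormedAddCommGroup g] [NormedSpace ℝ g]
    (l : g →ₗ[ℝ] g →ₗ[ℝ] g) (a : g) (f : g → ℝ) : g → ℝ :=
  fun x => -(fderiv ℝ f x (l a x))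

section Aux

variable {g : Type*} [NormedAddCommGroup g] [NormedSpace ℝ g] [FiniteDimensional ℝ g]

/-- Directional derivative of a smooth function is smooth. -/
lemma aux_dir_smooth {f : g → ℝ} (hf : ContDiff ℝ (⊤ : ℕ∞) f) (v : g) :
    ContDiff ℝ (⊤ : ℕ∞) (fun x => fderiv ℝ f x v) :=
  (hf.fderiv_right (by simp)).clm_apply contDiff_const

/-- Support of a directional derivative. -/
lemma aux_dir_supp (f : g → ℝ) (v : g) :
    tsupport (fun x => fderiv ℝ f x v) ⊆ tsupport f := by
  apply closure_minimal _ isClosed_closure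
  intro x hx
  have h : fderiv ℝ f x ≠ 0 := by
    intro h0
    simp [Function.mem_support, h0] at hx
  exact support_fderiv_subset ℝ h

/-- `x ↦ Df(x)[L x]` is smooth for a continuous linear `L`. -/
lemma aux_A_smooth {f : g → ℝ} (hf : ContDiff ℝ (⊤ : ℕ∞) f) (L : g →L[ℝ] g) :
    ContDiff ℝ (⊤ : ℕ∞) (fun x => fderiv ℝ f x (L x)) :=
  (hf.fderiv_right (by simp)).clm_apply L.contDiff

lemma aux_A_supp (f : g → ℝ) (L : g → g) :
    tsupport (fun x => fderiv ℝ f x (L x)) ⊆ tsupport f := by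
  apply closure_minimal _ isClosed_closure
  intro x hx
  have h : fderiv ℝ f x ≠ 0 := by
    intro h0
    simp [Function.mem_support, h0] at hx
  exact support_fderiv_subset ℝ h

/-- The key second-derivative commutation identity. -/
lemma aux_key {f : g → ℝ} (hf : ContDiff ℝ (⊤ : ℕ∞) f) (L : g →L[ℝ] g) (x v : g) :
    fderiv ℝ (fun y => fderiv ℝ f y (L y)) x v
      = fderiv ℝ (fun y => fderiv ℝ f y v) x (L x) + fderiv ℝ f x (L v) := by
  have hf' : ContDiff ℝ (⊤ : ℕ∞) (fderiv ℝ f) := hf.fderiv_right (by simp)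
  have hdf : DifferentiableAt ℝ (fderiv ℝ f) x := hf'.differentiable (by simp) x
  have h1 : fderiv ℝ (fun y => fderiv ℝ f y (L y)) x
      = (fderiv ℝ f x).comp (fderiv ℝ (fun y => L y) x)
        + (fderiv ℝ (fderiv ℝ f) x).flip (L x) :=
    fderiv_clm_apply hdf L.differentiableAt
  have h2 : fderiv ℝ (fun y => fderiv ℝ f y v) x
      = (fderiv ℝ f x).comp (fderiv ℝ (fun _ : g => v) x)
        + (fderiv ℝ (fderiv ℝ f) x).flip v :=
    fderiv_clm_apply hdf (differentiableAt_const v)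
  have hsym : ∀ u w : g, fderiv ℝ (fderiv ℝ f) x u w = fderiv ℝ (fderiv ℝ f) x w u := by
    intro u w
    exact second_derivative_symmetric
      (fun y => (hf.differentiable (by simp) y).hasFDerivAt) hdf.hasFDerivAt u w
  rw [h1, h2]
  simp [L.fderiv, hsym v (L x), add_comm]

end Aux

/-- Let `g` be a finite-dimensional real Lie algebra (normed space with
bilinear alternating bracket `l`), `B : ι → g` a basis identifying `S(g)` with
`MvPolynomial ι ℝ`, `Φ p = p(∂)` the attached constant-coefficient operator, and `Dact`
the extended adjoint action on `S(g)`.  Let `U` be an open (Ad-invariant) subset of `g`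
and `T` a distribution on `U` which is `g`-invariant, i.e. `T (adj_a φ) = 0` for all
`a ∈ g` and all test functions `φ` supported in `U`.  If `p ∈ S(g)^g` is invariant, then
the right action `T · p(∂)`, `φ ↦ T (p(∂) φ)`, is again a `g`-invariant distribution:
`(T · p(∂)) (adj_a φ) = T (p(∂) (adj_a φ)) = 0` for all such `a` and `φ`. -/
theorem right_action_invariant_operator_preserves_invariance
    {g : Type*} [NormedAddCommGroup g] [NormedSpace ℝ g] [FiniteDimensional ℝ g]
    (l : g →ₗ[ℝ] g →ₗ[ℝ] g)
    (halt : ∀ x : g, l x x = 0)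
    (hjac : ∀ x y z : g, l x (l y z) = l (l x y) z + l y (l x z))
    {ι : Type*} [Fintype ι] (B : Module.Basis ι ℝ g)
    (Φ : MvPolynomial ι ℝ →ₗ[ℝ] ((g → ℝ) →ₗ[ℝ] (g → ℝ)))
    (hΦ1 : ∀ f : g → ℝ, Φ 1 f = f)
    (hΦX : ∀ (q : MvPolynomial ι ℝ) (i : ι) (f : g → ℝ), ContDiff ℝ (⊤ : ℕ∞) f →
      Φ (q * MvPolynomial.X i) f = Φ q (fun x => fderiv ℝ f x (B i)))
    (Dact : g → Derivation ℝ (MvPolynomial ι ℝ) (MvPolynomial ι ℝ))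
    (hD : ∀ (a : g) (i : ι),
      Dact a (MvPolynomial.X i) = ∑ j, B.repr (l a (B i)) j • MvPolynomial.X j)
    (U : Set g) (hU : IsOpen U)
    (T : (g → ℝ) →ₗ[ℝ] ℝ)
    (hT : ∀ (a : g) (φ : g → ℝ), ContDiff ℝ (⊤ : ℕ∞) φ → HasCompactSupport φ →
      tsupport φ ⊆ U → T (adjVF l a φ) = 0)
    (p : MvPolynomial ι ℝ) (hp : ∀ a : g, Dact a p = 0) :
    ∀ (a : g) (φ : g → ℝ), ContDiff ℝ (⊤ : ℕ∞) φ → HasCompactSupport φ →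
      tsupport φ ⊆ U → T (Φ p (adjVF l a φ)) = 0 := by
  -- Smoothness & support of `Φ q f`.
  have hΦC : ∀ (c : ℝ) (f : g → ℝ), Φ (MvPolynomial.C c) f = c • f := by
    intro c f
    rw [MvPolynomial.C_eq_smul_one, map_smul, LinearMap.smul_apply, hΦ1]
  have hsm : ∀ q : MvPolynomial ι ℝ, ∀ f : g → ℝ, ContDiff ℝ (⊤ : ℕ∞) f →
      ContDiff ℝ (⊤ : ℕ∞) (Φ q f) ∧ tsupport (Φ q f) ⊆ tsupport f := by
    intro q
    induction q using MvPolynomial.induction_on with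
    | C c =>
      intro f hf
      rw [hΦC]
      refine ⟨hf.const_smul c, ?_⟩
      refine closure_mono ?_
      intro x hx
      simp only [Function.mem_support, Pi.smul_apply, smul_eq_mul] at hx
      intro h0
      exact hx (by simp [h0])
    | add q r hq hr =>
      intro f hf
      have hqf := hq f hf
      have hrf := hr f hf
      have hsum : Φ (q + r) f = Φ q f + Φ r f := by
        rw [map_add]; rfl
      rw [hsum]
      refine ⟨hqf.1.add hrf.1, ?_⟩
      refine (closure_minimal ((Function.support_add _ _).trans
        (Set.union_subset_union subset_closure subset_closure))
        (isClosed_closure.union isClosed_closure)).trans ?_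
      exact Set.union_subset hqf.2 hrf.2
    | mul_X q i hq =>
      intro f hf
      rw [hΦX q i f hf]
      have hdf : ContDiff ℝ (⊤ : ℕ∞) (fun x => fderiv ℝ f x (B i)) := aux_dir_smooth hf (B i)
      exact ⟨(hq _ hdf).1, (hq _ hdf).2.trans (aux_dir_supp f (B i))⟩
  intro a φ hφ hcφ hsupp
  set L : g →L[ℝ] g := LinearMap.toContinuousLinearMap (l a) with hL
  have hLx : ∀ x : g, L x = l a x := fun _ => rfl
  -- Commutation of Φ q with the adjoint vector field.
  have hcomm : ∀ q : MvPolynomial ι ℝ, ∀ f : g → ℝ, ContDiff ℝ (⊤ : ℕ∞) f →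
      Φ q (fun x => fderiv ℝ f x (l a x))
        = (fun x => fderiv ℝ (Φ q f) x (l a x)) + Φ (Dact a q) f := by
    intro q
    induction q using MvPolynomial.induction_on with
    | C c =>
      intro f hf
      have hdc : Dact a (MvPolynomial.C c) = 0 := by
        have : (MvPolynomial.C c : MvPolynomial ι ℝ) = algebraMap ℝ _ c := rfl
        rw [this, Derivation.map_algebraMap]
      rw [hdc, map_zero, hΦC, hΦC]
      funext x
      have : fderiv ℝ (c • f) x = c • fderiv ℝ f x := by
        have := fderiv_fun_const_smul (𝕜 := ℝ) (hf.differentiable (by simp) x) c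
        simpa [Pi.smul_def] using this
      simp [this]
    | add q r hq hr =>
      intro f hf
      have hqf := hq f hf
      have hrf := hr f hf
      have h1 : Φ (q + r) (fun x => fderiv ℝ f x (l a x))
          = Φ q (fun x => fderiv ℝ f x (l a x)) + Φ r (fun x => fderiv ℝ f x (l a x)) := by
        rw [map_add]; rfl
      have h2 : Φ (q + r) f = Φ q f + Φ r f := by rw [map_add]; rfl
      have h3 : Φ (Dact a (q + r)) f = Φ (Dact a q) f + Φ (Dact a r) f := by
        rw [map_add, map_add]; rfl
      rw [h1, hqf, hrf, h3]
      have h4 : (fun x => fderiv ℝ (Φ (q + r) f) x (l a x))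
          = (fun x => fderiv ℝ (Φ q f) x (l a x)) + (fun x => fderiv ℝ (Φ r f) x (l a x)) := by
        funext x
        have hd : fderiv ℝ (Φ q f + Φ r f) x = fderiv ℝ (Φ q f) x + fderiv ℝ (Φ r f) x :=
          fderiv_add ((hsm q f hf).1.differentiable (by simp) x)
            ((hsm r f hf).1.differentiable (by simp) x)
        simp [h2, hd]
      rw [h4]
      abel
    | mul_X q i hq =>
      intro f hf
      have hAf : ContDiff ℝ (⊤ : ℕ∞) (fun x => fderiv ℝ f x (l a x)) := by
        have := aux_A_smooth hf L
        simpa [hLx] using this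
      rw [hΦX q i _ hAf]
      have hdfi : ContDiff ℝ (⊤ : ℕ∞) (fun x => fderiv ℝ f x (B i)) := aux_dir_smooth hf (B i)
      have hstep : (fun x => fderiv ℝ (fun y => fderiv ℝ f y (l a y)) x (B i))
          = (fun x => fderiv ℝ (fun y => fderiv ℝ f y (B i)) x (l a x))
            + (fun x : g => fderiv ℝ f x (l a (B i))) := by
        funext x
        have := aux_key hf L x (B i)
        simpa [hLx] using this
      rw [hstep, map_add]
      -- first summand via the induction hypothesis
      have hIH := hq (fun x => fderiv ℝ f x (B i)) hdfi
      -- second summand: expand direction in the basis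
      have hexp : (fun x : g => fderiv ℝ f x (l a (B i)))
          = ∑ j, B.repr (l a (B i)) j • (fun x : g => fderiv ℝ f x (B j)) := by
        funext x
        have hv : (l a (B i)) = ∑ j, B.repr (l a (B i)) j • B j := (B.sum_repr _).symm
        rw [hv]
        rw [map_sum]; simp [Finset.sum_apply]
      have hsecond : Φ q (fun x : g => fderiv ℝ f x (l a (B i)))
          = Φ (q * Dact a (MvPolynomial.X i)) f := by
        rw [hexp, map_sum, hD a i, Finset.mul_sum, map_sum, LinearMap.sum_apply]
        refine Finset.sum_congr rfl fun j _ => ?_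
        rw [map_smul, ← hΦX q j f hf, mul_smul_comm, map_smul, LinearMap.smul_apply]
      rw [hsecond, hIH]
      rw [← hΦX q i f hf, ← hΦX (Dact a q) i f hf]
      have hleib : Dact a (q * MvPolynomial.X i)
          = Dact a q * MvPolynomial.X i + q * Dact a (MvPolynomial.X i) := by
        rw [Derivation.leibniz]
        simp [smul_eq_mul]
        ring
      rw [hleib, map_add, LinearMap.add_apply]
      abel
  -- Conclusion.
  have hApφ : (fun x => fderiv ℝ φ x (l a x)) = -adjVF l a φ := by
    funext x; simp [adjVF]
  have hcommp := hcomm p φ hφ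
  rw [hp a, map_zero] at hcommp
  have hΦp := hsm p φ hφ
  have hfinal : Φ p (adjVF l a φ) = adjVF l a (Φ p φ) := by
    have h1 : Φ p (adjVF l a φ) = -Φ p (fun x => fderiv ℝ φ x (l a x)) := by
      rw [hApφ, map_neg, neg_neg]
    rw [h1, hcommp]
    funext x
    simp [adjVF]
  rw [hfinal]
  exact hT a (Φ p φ) hΦp.1
    (IsCompact.of_isClosed_subset hcφ isClosed_closure hΦp.2)
    (hΦp.2.trans hsupp)
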